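/- arXiv:2208.02378 — 2 statements merged into one kernel-verified Lean document; each statement's English description precedes it below -/
import Mathlib

section
/- Let φ : [n_1] × ⋯ × [n_{m-1}] → [n] be a bijection (n = n_1⋯n_{m-1} even) defining a permutation array A, let E = {i ∈ [m-1] : n_i even}, and θ = 1 - ∏_{i∈E} (n_i - 1)/n_i. Then the multiset 𝓤 of toroidal vectors (h_1,...,h_m) of A with h_i = n_i/2 for some i ∈ [m-1] has cardinality |𝓤| = n²θ. -/
open scoped Classical

def halfElt (q : ℕ) : ZMod q := ((q / 2 : ℕ) : ZMod q)

lemma halfElt_ne_zero {q : ℕ} (hq : 2 ≤ q) : halfElt q ≠ 0 := by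
  intro h
  rw [halfElt, ZMod.natCast_eq_zero_iff] at h
  have h1 : 0 < q / 2 := by omega
  have := Nat.le_of_dvd h1 h
  omega

lemma coord_card {q : ℕ} (hq : 2 ≤ q) :
    (Finset.univ.filter fun x : Fin q × Fin q =>
      (((x.2 : ℤ) - (x.1 : ℤ)) : ZMod q) = halfElt q).card = q := by
  haveI : NeZero q := ⟨by omega⟩
  have key : (Finset.univ.filter fun x : Fin q × Fin q =>
      (((x.2 : ℤ) - (x.1 : ℤ)) : ZMod q) = halfElt q)
      = Finset.univ.image (fun a : Fin q =>
          (a, (⟨(((a : ℕ) : ZMod q) + halfElt q).val, ZMod.val_lt _⟩ : Fin q))) := by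
    ext ⟨a, b⟩
    simp only [Finset.mem_filter, Finset.mem_univ, true_and, Finset.mem_image]
    constructor
    · intro h
      refine ⟨a, ?_⟩
      have h' : ((b : ℕ) : ZMod q) = ((a : ℕ) : ZMod q) + halfElt q := by
        push_cast at h
        linear_combination h
      refine Prod.ext rfl (Fin.ext ?_)
      simp only
      rw [← h', ZMod.val_cast_of_lt b.isLt]
    · rintro ⟨c, hc⟩
      obtain ⟨rfl, rfl⟩ := Prod.mk.injEq .. ▸ hc
      push_cast
      have : ((ZMod.val (((c : ℕ) : ZMod q) + halfElt q) : ℕ) : ZMod q)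
          = ((c : ℕ) : ZMod q) + halfElt q := ZMod.natCast_zmod_val _
      rw [this]
      ring
  rw [key, Finset.card_image_of_injective _ (fun a b h => (Prod.mk.injEq .. ▸ h).1),
    Finset.card_univ, Fintype.card_fin]

lemma coord_compl_card {q : ℕ} (hq : 2 ≤ q) :
    (Finset.univ.filter fun x : Fin q × Fin q =>
      ¬ (Even q ∧ (((x.2 : ℤ) - (x.1 : ℤ)) : ZMod q) = halfElt q)).card
      = if Even q then q * q - q else q * q := by
  by_cases hE : Even q
  · simp only [hE, if_pos, true_and]
    have h1 := Finset.card_filter_add_card_filter_not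
      (s := (Finset.univ : Finset (Fin q × Fin q)))
      (p := fun x : Fin q × Fin q => (((x.2 : ℤ) - (x.1 : ℤ)) : ZMod q) = halfElt q)
    rw [coord_card hq, Finset.card_univ] at h1
    simp only [Fintype.card_prod, Fintype.card_fin] at h1
    omega
  · simp only [hE, if_neg, false_and, not_false_iff, Finset.filter_true, Finset.card_univ]
    simp [Fintype.card_prod]

/-- Let `φ : [n 1] × ⋯ × [n (m-1)] → [N]` (with `N = ∏ n i` even) be a
bijection defining a permutation array `A`, `E = {i : n i even}`, and
`θ = 1 - ∏_{i ∈ E} (n i - 1)/(n i)`.  Then the multiset `𝓤` of toroidal vectors of `A`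
(over ordered pairs of distinct dots) having `h_i = n_i / 2` for some `i ≤ m - 1`
has cardinality `|𝓤| = N² θ`. -/
theorem card_U_eq (m' : ℕ) (n : Fin m' → ℕ) (N : ℕ)
    (hn : ∀ i, 2 ≤ n i) (hN : ∏ i, n i = N) (hNeven : Even N)
    (φ : ((i : Fin m') → Fin (n i)) ≃ Fin N) :
    ((Finset.univ.filter
        (fun p : ((i : Fin m') → Fin (n i)) × ((i : Fin m') → Fin (n i)) =>
          p.1 ≠ p.2 ∧ ∃ i, Even (n i) ∧
            (((p.2 i : ℤ) - (p.1 i : ℤ)) : ZMod (n i)) = halfElt (n i))).card : ℚ)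
      = (N : ℚ) ^ 2 *
        (1 - ∏ i ∈ Finset.univ.filter (fun i => Even (n i)), ((n i : ℚ) - 1) / (n i : ℚ)) := by
  set α := ((i : Fin m') → Fin (n i))
  set P : α × α → Prop := fun p => ∃ i, Even (n i) ∧
      (((p.2 i : ℤ) - (p.1 i : ℤ)) : ZMod (n i)) = halfElt (n i) with hP
  -- drop the `p.1 ≠ p.2` condition
  have himp : ∀ p : α × α, P p → p.1 ≠ p.2 := by
    rintro ⟨a, b⟩ ⟨i, hev, heq⟩ h
    have hab : a = b := h
    subst hab
    simp only [sub_self, Int.cast_zero] at heq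
    exact halfElt_ne_zero (hn i) heq.symm
  have hfilter : (Finset.univ.filter
        (fun p : α × α => p.1 ≠ p.2 ∧ P p))
      = Finset.univ.filter P := by
    apply Finset.filter_congr
    intro p _
    exact ⟨fun h => h.2, fun h => ⟨himp p h, h⟩⟩
  -- complement count
  let e0 : (α × α) ≃ ((i : Fin m') → Fin (n i) × Fin (n i)) :=
    { toFun := fun p i => (p.1 i, p.2 i)
      invFun := fun g => (fun i => (g i).1, fun i => (g i).2)
      left_inv := fun p => rfl
      right_inv := fun g => rfl }
  have hcompl : (Finset.univ.filter fun p : α × α => ¬ P p).card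
      = ∏ i, (Finset.univ.filter fun x : Fin (n i) × Fin (n i) =>
          ¬ (Even (n i) ∧ (((x.2 : ℤ) - (x.1 : ℤ)) : ZMod (n i)) = halfElt (n i))).card := by
    rw [← Fintype.card_subtype]
    have e1 : {p : α × α // ¬ P p} ≃
        ((i : Fin m') → {x : Fin (n i) × Fin (n i) //
          ¬ (Even (n i) ∧ (((x.2 : ℤ) - (x.1 : ℤ)) : ZMod (n i)) = halfElt (n i))}) := by
      refine (e0.subtypeEquiv ?_).trans (Equiv.subtypePiEquivPi)
      intro p
      rw [hP]
      simp only [not_exists, not_and]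
      exact Iff.rfl
    rw [Fintype.card_congr e1, Fintype.card_pi]
    congr 1
    ext i
    rw [Fintype.card_subtype]
  -- total count
  have htotal : (Finset.univ.filter P).card
      + (Finset.univ.filter fun p : α × α => ¬ P p).card = N * N := by
    rw [Finset.card_filter_add_card_filter_not, Finset.card_univ]
    simp only [α, Fintype.card_prod, Fintype.card_pi, Fintype.card_fin, hN]
  -- move to ℚ
  rw [hfilter]
  have hQ : ((Finset.univ.filter P).card : ℚ)
      = (N : ℚ) ^ 2 - ((Finset.univ.filter fun p : α × α => ¬ P p).card : ℚ) := by
    have := congrArg (Nat.cast : ℕ → ℚ) htotal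
    push_cast at this
    rw [sq]
    linarith [this]
  rw [hQ, hcompl]
  have hprod : ((∏ i, (Finset.univ.filter fun x : Fin (n i) × Fin (n i) =>
      ¬ (Even (n i) ∧ (((x.2 : ℤ) - (x.1 : ℤ)) : ZMod (n i)) = halfElt (n i))).card : ℕ) : ℚ)
      = (N : ℚ) ^ 2 *
        ∏ i ∈ Finset.univ.filter (fun i => Even (n i)), ((n i : ℚ) - 1) / (n i : ℚ) := by
    have hc : ∀ i, ((Finset.univ.filter fun x : Fin (n i) × Fin (n i) =>
        ¬ (Even (n i) ∧ (((x.2 : ℤ) - (x.1 : ℤ)) : ZMod (n i)) = halfElt (n i))).card)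
        = if Even (n i) then n i * n i - n i else n i * n i := fun i => coord_compl_card (hn i)
    rw [Nat.cast_prod]
    have hNQ : (N : ℚ) ^ 2 = ∏ i, (n i : ℚ) ^ 2 := by
      rw [← hN]
      push_cast
      rw [← Finset.prod_pow]
    rw [hNQ, Finset.prod_filter, ← Finset.prod_mul_distrib]
    apply Finset.prod_congr rfl
    intro i _
    have hni : (2 : ℚ) ≤ (n i : ℚ) := by exact_mod_cast hn i
    have hne : (n i : ℚ) ≠ 0 := by linarith
    rw [hc i]
    by_cases hE : Even (n i)
    · simp only [hE, if_pos]
      have hle : n i ≤ n i * n i := Nat.le_mul_of_pos_left (n i) (by have := hn i; omega)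
      rw [Nat.cast_sub hle]
      push_cast
      field_simp
    · simp only [hE, if_neg, not_false_iff]
      push_cast
      ring
  rw [hprod]
  ring
end

section
/- If A is a three-dimensional permutation array of size 2 × k × 2k with k odd and k ≥ 3, then some 2 × k × 2k window of the periodic extension of A has a repeated difference vector; in particular, A is not periodic Costas. -/
/-!
Read `φ` as a bijection `T : ℤ/2 × ℤ/k → ℤ/2k` and consider the differences
`T (p + s) - T p` along the shift `s = (0, 1)`. They telescope to `0`, whereas the elements of
`ℤ/2k` sum to `k ≠ 0`; so the difference map is not injective, and two distinct dots `p₁, p₂`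
share a toroidal difference vector `(0, 1, c)`. Coordinatewise, a repeated toroidal vector
lifts to a repeated difference vector inside one window unless some component `v` is a half
turn (`2v = 0 ≠ v`) with the two dots exactly `v` apart in that coordinate. This is impossible
in the first two coordinates, and in the third it would give `p₁ + s = p₂` and `p₂ + s = p₁`,
i.e. `2 = 0` in `ℤ/k`.
-/

/-- `α ∈ ℤ³` is a dot of the periodic extension of the three-dimensional permutation
array of size `n₁ × n₂ × n₁n₂` defined by `φ`. -/
def IsExtDot3 (n₁ n₂ : ℕ) (φ : Fin n₁ × Fin n₂ ≃ Fin (n₁ * n₂)) (α : ℤ × ℤ × ℤ) : Prop :=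
  ∃ p : Fin n₁ × Fin n₂,
    (α.1 : ZMod n₁) = ((p.1 : ℕ) : ZMod n₁) ∧
    (α.2.1 : ZMod n₂) = ((p.2 : ℕ) : ZMod n₂) ∧
    (α.2.2 : ZMod (n₁ * n₂)) = ((φ p : ℕ) : ZMod (n₁ * n₂))

/-- `α` lies in the `n₁ × n₂ × n₁n₂` window based at `κ`. -/
def InWindow3 (n₁ n₂ : ℕ) (κ α : ℤ × ℤ × ℤ) : Prop :=
  κ.1 ≤ α.1 ∧ α.1 < κ.1 + (n₁ : ℤ) ∧
  κ.2.1 ≤ α.2.1 ∧ α.2.1 < κ.2.1 + (n₂ : ℤ) ∧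
  κ.2.2 ≤ α.2.2 ∧ α.2.2 < κ.2.2 + ((n₁ * n₂ : ℕ) : ℤ)

open Finset

theorem ZMod.exists_window_lifts {n : ℕ} [NeZero n] (a₁ a₂ v : ZMod n)
    (h : a₂ - a₁ = v → v + v = 0 → v = 0) :
    ∃ κ A₁ A₂ D : ℤ, (A₁ : ZMod n) = a₁ ∧ (A₂ : ZMod n) = a₂ ∧ (D : ZMod n) = v ∧
      A₁ ∈ Set.Ico κ (κ + n) ∧ A₁ + D ∈ Set.Ico κ (κ + n) ∧
      A₂ ∈ Set.Ico κ (κ + n) ∧ A₂ + D ∈ Set.Ico κ (κ + n) := by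
  obtain ⟨x, hx⟩ := ZMod.intCast_surjective a₁
  have lift (b : ZMod n) : ∃ m : ℤ, 0 ≤ m ∧ m < n ∧ (m : ZMod n) = b :=
    ⟨b.val, by positivity, by exact_mod_cast b.val_lt, by simp⟩
  obtain ⟨a, ha₀, ha, hav⟩ := lift (a₂ - a₁)
  obtain ⟨d, hd₀, hd, hdv⟩ := lift v
  have hxa : ((x + a : ℤ) : ZMod n) = a₂ := by push_cast [hx, hav]; ring
  have hxan : ((x + a - n : ℤ) : ZMod n) = a₂ := by push_cast [hx, hav]; simp
  have hdnv : ((d - n : ℤ) : ZMod n) = v := by push_cast [hdv]; simp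
  simp only [Set.mem_Ico]
  rcases lt_or_ge (a + d) (n : ℤ) with h₁ | h₁
  · exact ⟨x, x, x + a, d, hx, hxa, hdv, by omega⟩
  rcases lt_or_ge d a with h₂ | h₂
  · exact ⟨x + a - n, x, x + a - n, d, hx, hxan, hdv, by omega⟩
  rcases lt_or_ge a d with h₃ | h₃
  · exact ⟨x + d - n, x, x + a, d - n, hx, hxa, hdnv, by omega⟩
  rcases lt_or_ge (n : ℤ) (a + d) with h₄ | h₄
  · exact ⟨x + a + d - 2 * n, x, x + a - n, d - n, hx, hxan, hdnv, by omega⟩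
  -- all four placements fail only for the half-turn `a = d = n / 2`, which `h` excludes
  have hv : v = 0 := by
    refine h (by rw [← hav, ← hdv, show a = d by omega]) ?_
    rw [← hdv, ← Int.cast_add, show d + d = n by omega]
    simp
  rw [← hdv, ZMod.intCast_zmod_eq_zero_iff_dvd] at hv
  have : d = 0 := Int.eq_zero_of_dvd_of_nonneg_of_lt hd₀ hd hv
  omega

theorem exists_ne_sub_eq_sub_of_sum_ne_zero {G H : Type*} [AddCommGroup G] [Fintype G]
    [AddCommGroup H] [Fintype H] (hcard : Fintype.card G = Fintype.card H)
    (hH : ∑ h : H, h ≠ 0) (f : G → H) (s : G) :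
    ∃ p₁ p₂, p₁ ≠ p₂ ∧ f (p₁ + s) - f p₁ = f (p₂ + s) - f p₂ := by
  by_contra! hinj
  set g : G → H := fun p => f (p + s) - f p
  have hg : Function.Bijective g :=
    (Fintype.bijective_iff_injective_and_card g).mpr
      ⟨fun p q hpq => by_contra fun hne => hinj p q hne hpq, hcard⟩
  have htel : ∑ p, g p = 0 := by
    simp only [g, sum_sub_distrib, sub_eq_zero]
    exact Equiv.sum_comp (Equiv.addRight s) f
  exact hH ((hg.sum_comp id).symm.trans htel)

theorem ZMod.finEquiv_apply {n : ℕ} [NeZero n] (i : Fin n) :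
    ZMod.finEquiv n i = ((i : ℕ) : ZMod n) := by
  obtain ⟨m, rfl⟩ : ∃ m, n = m + 1 := Nat.exists_eq_succ_of_ne_zero (NeZero.ne n)
  exact (Fin.cast_val_eq_self i).symm

theorem ZMod.sum_univ_two_mul (k : ℕ) [NeZero k] : ∑ z : ZMod (2 * k), z = k := by
  obtain ⟨m, rfl⟩ : ∃ m, k = m + 1 := Nat.exists_eq_succ_of_ne_zero (NeZero.ne k)
  have hgauss : (∑ i ∈ range (2 * (m + 1)), i) = 2 * (m + 1) * m + (m + 1) := by
    rw [Finset.sum_range_id, show 2 * (m + 1) - 1 = 2 * m + 1 by omega,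
      show 2 * (m + 1) * (2 * m + 1) = 2 * ((m + 1) * (2 * m + 1)) by ring,
      Nat.mul_div_cancel_left _ two_pos]
    ring
  calc ∑ z : ZMod (2 * (m + 1)), z
      = ∑ i : Fin (2 * (m + 1)), ((i : ℕ) : ZMod (2 * (m + 1))) := by
        simp only [← ZMod.finEquiv_apply]
        exact ((ZMod.finEquiv _).toEquiv.sum_comp id).symm
    _ = ((∑ i ∈ range (2 * (m + 1)), i : ℕ) : ZMod (2 * (m + 1))) := by
        rw [Fin.sum_univ_eq_sum_range (fun i => (i : ZMod (2 * (m + 1)))), Nat.cast_sum]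
    _ = ((m + 1 : ℕ) : ZMod (2 * (m + 1))) := by simp [hgauss]

def torusArray {n₁ n₂ : ℕ} [NeZero n₁] [NeZero n₂] (φ : Fin n₁ × Fin n₂ ≃ Fin (n₁ * n₂)) :
    ZMod n₁ × ZMod n₂ ≃ ZMod (n₁ * n₂) :=
  ((ZMod.finEquiv n₁).symm.toEquiv.prodCongr (ZMod.finEquiv n₂).symm.toEquiv).trans
    (φ.trans (ZMod.finEquiv (n₁ * n₂)).toEquiv)

theorem isExtDot3_of_intCast_eq {n₁ n₂ : ℕ} [NeZero n₁] [NeZero n₂]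
    (φ : Fin n₁ × Fin n₂ ≃ Fin (n₁ * n₂)) {A B C : ℤ} {q : ZMod n₁ × ZMod n₂}
    (hA : (A : ZMod n₁) = q.1) (hB : (B : ZMod n₂) = q.2)
    (hC : (C : ZMod (n₁ * n₂)) = torusArray φ q) :
    IsExtDot3 n₁ n₂ φ (A, B, C) :=
  ⟨((ZMod.finEquiv n₁).symm q.1, (ZMod.finEquiv n₂).symm q.2),
    by simp [← ZMod.finEquiv_apply, hA], by simp [← ZMod.finEquiv_apply, hB],
    by simp [← ZMod.finEquiv_apply, hC, torusArray, Prod.map]⟩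

theorem add_self_eq_zero_of_shift_swaps {G H : Type*} [AddCommGroup G] [AddCommGroup H]
    {T : G → H} (hT : Function.Injective T) {p₁ p₂ s : G} {c : H}
    (h₁ : T (p₁ + s) - T p₁ = c) (h₂ : T (p₂ + s) - T p₂ = c) (h : T p₂ - T p₁ = c)
    (hc : c + c = 0) : s + s = 0 := by
  have e₁ : p₁ + s = p₂ :=
    hT (by rw [← sub_eq_zero, ← sub_sub_sub_cancel_right _ _ (T p₁), h₁, h, sub_self])
  have e₂ : p₂ + s = p₁ :=
    hT (by rw [← sub_eq_zero, ← sub_add_sub_cancel _ (T p₂), h₂, h, hc])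
  calc s + s = p₁ + s + s - p₁ := by abel
    _ = 0 := by rw [e₁, e₂, sub_self]

theorem exists_repeated_difference_of_torus {n₁ n₂ : ℕ} [NeZero n₁] [NeZero n₂]
    (φ : Fin n₁ × Fin n₂ ≃ Fin (n₁ * n₂)) {p₁ p₂ s : ZMod n₁ × ZMod n₂} {c : ZMod (n₁ * n₂)}
    (hp : p₁ ≠ p₂) (hs : s ≠ 0)
    (hc₁ : torusArray φ (p₁ + s) - torusArray φ p₁ = c)
    (hc₂ : torusArray φ (p₂ + s) - torusArray φ p₂ = c)
    (h₁ : p₂.1 - p₁.1 = s.1 → s.1 + s.1 = 0 → s.1 = 0)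
    (h₂ : p₂.2 - p₁.2 = s.2 → s.2 + s.2 = 0 → s.2 = 0)
    (h₃ : torusArray φ p₂ - torusArray φ p₁ = c → c + c = 0 → c = 0) :
    ∃ κ α₁ ω₁ α₂ ω₂ : ℤ × ℤ × ℤ,
      InWindow3 n₁ n₂ κ α₁ ∧ InWindow3 n₁ n₂ κ ω₁ ∧
      InWindow3 n₁ n₂ κ α₂ ∧ InWindow3 n₁ n₂ κ ω₂ ∧
      IsExtDot3 n₁ n₂ φ α₁ ∧ IsExtDot3 n₁ n₂ φ ω₁ ∧
      IsExtDot3 n₁ n₂ φ α₂ ∧ IsExtDot3 n₁ n₂ φ ω₂ ∧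
      α₁ ≠ ω₁ ∧ α₂ ≠ ω₂ ∧ (α₁, ω₁) ≠ (α₂, ω₂) ∧
      ω₁ - α₁ = ω₂ - α₂ := by
  obtain ⟨κx, X₁, X₂, Dx, hX₁, hX₂, hDx, hx₁, hx₁', hx₂, hx₂'⟩ :=
    ZMod.exists_window_lifts p₁.1 p₂.1 s.1 h₁
  obtain ⟨κy, Y₁, Y₂, Dy, hY₁, hY₂, hDy, hy₁, hy₁', hy₂, hy₂'⟩ :=
    ZMod.exists_window_lifts p₁.2 p₂.2 s.2 h₂
  obtain ⟨κz, Z₁, Z₂, Dz, hZ₁, hZ₂, hDz, hz₁, hz₁', hz₂, hz₂'⟩ :=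
    ZMod.exists_window_lifts (torusArray φ p₁) (torusArray φ p₂) c h₃
  have hD : Dx ≠ 0 ∨ Dy ≠ 0 := by
    by_contra! h0
    exact hs (Prod.ext (by simp [← hDx, h0.1]) (by simp [← hDy, h0.2]))
  refine ⟨(κx, κy, κz), (X₁, Y₁, Z₁), (X₁ + Dx, Y₁ + Dy, Z₁ + Dz), (X₂, Y₂, Z₂),
    (X₂ + Dx, Y₂ + Dy, Z₂ + Dz), ⟨hx₁.1, hx₁.2, hy₁.1, hy₁.2, hz₁.1, hz₁.2⟩,
    ⟨hx₁'.1, hx₁'.2, hy₁'.1, hy₁'.2, hz₁'.1, hz₁'.2⟩, ⟨hx₂.1, hx₂.2, hy₂.1, hy₂.2, hz₂.1, hz₂.2⟩,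
    ⟨hx₂'.1, hx₂'.2, hy₂'.1, hy₂'.2, hz₂'.1, hz₂'.2⟩, isExtDot3_of_intCast_eq φ hX₁ hY₁ hZ₁,
    isExtDot3_of_intCast_eq φ (q := p₁ + s) (by push_cast [hX₁, hDx]; rfl)
      (by push_cast [hY₁, hDy]; rfl) (by rw [Int.cast_add, hZ₁, hDz, ← hc₁, add_sub_cancel]),
    isExtDot3_of_intCast_eq φ hX₂ hY₂ hZ₂,
    isExtDot3_of_intCast_eq φ (q := p₂ + s) (by push_cast [hX₂, hDx]; rfl)
      (by push_cast [hY₂, hDy]; rfl) (by rw [Int.cast_add, hZ₂, hDz, ← hc₂, add_sub_cancel]),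
    ?_, ?_, ?_, by simp [Prod.mk_sub_mk]⟩
  · simp only [ne_eq, Prod.mk.injEq]
    omega
  · simp only [ne_eq, Prod.mk.injEq]
    omega
  · rintro ⟨⟨rfl, rfl, -⟩, -⟩
    exact hp (Prod.ext (hX₁.symm.trans hX₂) (hY₁.symm.trans hY₂))

theorem two_by_odd_repeated_difference_general (k : ℕ) (hk3 : 3 ≤ k)
    (φ : Fin 2 × Fin k ≃ Fin (2 * k)) :
    ∃ κ α₁ ω₁ α₂ ω₂ : ℤ × ℤ × ℤ,
      InWindow3 2 k κ α₁ ∧ InWindow3 2 k κ ω₁ ∧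
      InWindow3 2 k κ α₂ ∧ InWindow3 2 k κ ω₂ ∧
      IsExtDot3 2 k φ α₁ ∧ IsExtDot3 2 k φ ω₁ ∧
      IsExtDot3 2 k φ α₂ ∧ IsExtDot3 2 k φ ω₂ ∧
      α₁ ≠ ω₁ ∧ α₂ ≠ ω₂ ∧ (α₁, ω₁) ≠ (α₂, ω₂) ∧
      ω₁ - α₁ = ω₂ - α₂ := by
  have : NeZero k := ⟨by omega⟩
  have : Fact (1 < k) := ⟨by omega⟩
  have htwo : (1 + 1 : ZMod k) ≠ 0 := by
    rw [one_add_one_eq_two, ← Nat.cast_ofNat, Ne, ZMod.natCast_eq_zero_iff]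
    exact fun h => absurd (Nat.le_of_dvd two_pos h) (by omega)
  have hsum : ∑ z : ZMod (2 * k), z ≠ 0 := by
    rw [ZMod.sum_univ_two_mul, Ne, ZMod.natCast_eq_zero_iff]
    exact fun h => absurd (Nat.le_of_dvd (NeZero.pos k) h) (by omega)
  obtain ⟨p₁, p₂, hp, hdiff⟩ := exists_ne_sub_eq_sub_of_sum_ne_zero (by simp [ZMod.card])
    hsum (torusArray φ) ((0, 1) : ZMod 2 × ZMod k)
  refine exists_repeated_difference_of_torus φ hp ?_ rfl hdiff.symm (fun _ _ => rfl)
    (fun _ h => absurd h htwo) fun h hc => absurd ?_ htwo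
  · simp
  · exact congrArg Prod.snd
      (add_self_eq_zero_of_shift_swaps (torusArray φ).injective rfl hdiff.symm h hc)

/-- If `A` is a three-dimensional permutation array of size
`2 × k × 2k` with `k` odd and `k ≥ 3`, then some `2 × k × 2k` window of the periodic
extension of `A` has a repeated difference vector; in particular, `A` is not
periodic Costas. -/
theorem two_by_odd_repeated_difference (k : ℕ) (hk : Odd k) (hk3 : 3 ≤ k)
    (φ : Fin 2 × Fin k ≃ Fin (2 * k)) :
    ∃ κ α₁ ω₁ α₂ ω₂ : ℤ × ℤ × ℤ,
      InWindow3 2 k κ α₁ ∧ InWindow3 2 k κ ω₁ ∧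
      InWindow3 2 k κ α₂ ∧ InWindow3 2 k κ ω₂ ∧
      IsExtDot3 2 k φ α₁ ∧ IsExtDot3 2 k φ ω₁ ∧
      IsExtDot3 2 k φ α₂ ∧ IsExtDot3 2 k φ ω₂ ∧
      α₁ ≠ ω₁ ∧ α₂ ≠ ω₂ ∧ (α₁, ω₁) ≠ (α₂, ω₂) ∧
      ω₁ - α₁ = ω₂ - α₂ :=
  two_by_odd_repeated_difference_general k hk3 φ
end
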